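/- arXiv:0707.1722 — 3 statements merged into one kernel-verified Lean document; each statement's English description precedes it below -/
import Mathlib

section
/- For any unit vector ψ ∈ ℂ^d, Tr(W_{λ,d}(|ψ⟩⟨ψ|)²) = λ² + (2λ(1-λ)/(d-1))(1 - |⟨ψ|ψ̄⟩|²) + (1-λ)²/(d-1), where ψ̄ is the entrywise complex conjugate of ψ in the standard basis. -/
open Matrix Finset Kronecker

noncomputable section

/-- Outer product |ψ⟩⟨ψ|. -/
def outer {n : Type*} [Fintype n] (ψ : n → ℂ) : Matrix n n ℂ :=
  fun i j => ψ i * star (ψ j)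

/-- Outer product |φ⟩⟨χ|. -/
def outerLR {n : Type*} [Fintype n] (φ χ : n → ℂ) : Matrix n n ℂ :=
  fun i j => φ i * star (χ j)

/-- Inner product ⟨φ|χ⟩ (conjugate-linear in the first argument). -/
def cinner {n : Type*} [Fintype n] (φ χ : n → ℂ) : ℂ := ∑ i, star (φ i) * χ i

/-- Entrywise complex conjugate of a vector. -/
def conjVec {n : Type*} (ψ : n → ℂ) : n → ℂ := fun i => star (ψ i)

/-- Depolarized Werner–Holevo channel W_{λ,d}(ρ) = λρ + (1-λ)(Tr(ρ)·1 - ρᵀ)/(d-1). -/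
def WH (d : ℕ) (lam : ℝ) (ρ : Matrix (Fin d) (Fin d) ℂ) : Matrix (Fin d) (Fin d) ℂ :=
  (lam : ℂ) • ρ +
    (((1 - lam : ℝ) : ℂ) * ((d : ℂ) - 1)⁻¹) •
      (ρ.trace • (1 : Matrix (Fin d) (Fin d) ℂ) - ρ.transpose)

/-- Tensor product Φ₁ ⊗ Φ₂ of two linear maps on d×d matrices, acting on d²×d² matrices. -/
def tensorMap {d : ℕ}
    (Φ₁ Φ₂ : Matrix (Fin d) (Fin d) ℂ → Matrix (Fin d) (Fin d) ℂ)
    (M : Matrix (Fin d × Fin d) (Fin d × Fin d) ℂ) :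
    Matrix (Fin d × Fin d) (Fin d × Fin d) ℂ :=
  fun p q => ∑ i, ∑ j, ∑ k, ∑ l,
    M (i, k) (j, l) * (Φ₁ (Matrix.single i j 1)) p.1 q.1 *
      (Φ₂ (Matrix.single k l 1)) p.2 q.2

/-- Partial trace over the first tensor factor. -/
def ptr1 {d : ℕ} (M : Matrix (Fin d × Fin d) (Fin d × Fin d) ℂ) : Matrix (Fin d) (Fin d) ℂ :=
  fun i j => ∑ k, M (k, i) (k, j)

/-- Partial trace over the second tensor factor. -/
def ptr2 {d : ℕ} (M : Matrix (Fin d × Fin d) (Fin d × Fin d) ℂ) : Matrix (Fin d) (Fin d) ℂ :=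
  fun i j => ∑ k, M (i, k) (j, k)

/-- Partial transpose on the first tensor factor. -/
def pt1 {d : ℕ} (M : Matrix (Fin d × Fin d) (Fin d × Fin d) ℂ) :
    Matrix (Fin d × Fin d) (Fin d × Fin d) ℂ :=
  fun p q => M (q.1, p.2) (p.1, q.2)

/-- Partial transpose on the second tensor factor. -/
def pt2 {d : ℕ} (M : Matrix (Fin d × Fin d) (Fin d × Fin d) ℂ) :
    Matrix (Fin d × Fin d) (Fin d × Fin d) ℂ :=
  fun p q => M (p.1, q.2) (q.1, p.2)

/-! On a density matrix `ρ` the channel is `λ ρ + c (1 - ρᵀ)` with `c = (1 - λ)/(d - 1)`, so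
`Tr (W ρ)²` is a quadratic polynomial in `λ` and `c` whose coefficients are `Tr ρ`, `Tr ρ²` and
`Tr (ρ ρᵀ)` (transposition preserves traces of products). For `ρ = |ψ⟩⟨ψ|` these are `1`, `1`
and `|⟨ψ|ψ̄⟩|²`. -/

section PureState

variable {n : Type*} [Fintype n] (ψ : n → ℂ)

lemma trace_outer : (outer ψ).trace = cinner ψ ψ := by
  simp only [outer, cinner, Matrix.trace, Matrix.diag, mul_comm]

lemma trace_outer_mul_outer : (outer ψ * outer ψ).trace = cinner ψ ψ ^ 2 := by
  simp only [outer, cinner, Matrix.trace, Matrix.diag, Matrix.mul_apply, sq, Finset.sum_mul_sum]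
  exact Finset.sum_congr rfl fun i _ => Finset.sum_congr rfl fun k _ => by ring

lemma trace_outer_mul_transpose_outer :
    (outer ψ * (outer ψ)ᵀ).trace = (‖cinner ψ (conjVec ψ)‖ ^ 2 : ℝ) := by
  rw [Complex.ofReal_pow, ← Complex.conj_mul']
  simp only [outer, cinner, conjVec, Matrix.trace, Matrix.diag, Matrix.mul_apply,
    Matrix.transpose_apply, map_sum, map_mul, Complex.star_def, Complex.conj_conj,
    Finset.sum_mul_sum]
  exact Finset.sum_congr rfl fun i _ => Finset.sum_congr rfl fun k _ => by ring

end PureState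

lemma trace_WH_mul_self (d : ℕ) (lam : ℝ) (ρ : Matrix (Fin d) (Fin d) ℂ) :
    (WH d lam ρ * WH d lam ρ).trace =
      let c : ℂ := ((1 - lam : ℝ) : ℂ) * ((d : ℂ) - 1)⁻¹
      lam ^ 2 * (ρ * ρ).trace + 2 * lam * c * (ρ.trace ^ 2 - (ρ * ρᵀ).trace)
        + c ^ 2 * ((d - 2) * ρ.trace ^ 2 + (ρ * ρ).trace) := by
  have hTT : (ρᵀ * ρᵀ).trace = (ρ * ρ).trace := by
    rw [← Matrix.transpose_mul, Matrix.trace_transpose]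
  have hTρ : (ρᵀ * ρ).trace = (ρ * ρᵀ).trace := Matrix.trace_mul_comm _ _
  simp only [WH, Matrix.add_mul, Matrix.mul_add, Matrix.smul_mul, Matrix.mul_smul,
    Matrix.sub_mul, Matrix.mul_sub, Matrix.one_mul, Matrix.mul_one, Matrix.trace_add,
    Matrix.trace_sub, Matrix.trace_smul, Matrix.trace_transpose, Matrix.trace_one,
    Fintype.card_fin, hTT, hTρ, smul_eq_mul]
  ring

theorem WH_single_output_two_norm_general (d : ℕ) (lam : ℝ)
    (ψ : Fin d → ℂ) (hψ : cinner ψ ψ = 1) :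
    (WH d lam (outer ψ) * WH d lam (outer ψ)).trace =
      ((lam ^ 2 + 2 * lam * (1 - lam) / ((d : ℝ) - 1) * (1 - ‖cinner ψ (conjVec ψ)‖ ^ 2)
        + (1 - lam) ^ 2 / ((d : ℝ) - 1) : ℝ) : ℂ) := by
  rw [trace_WH_mul_self, trace_outer, trace_outer_mul_outer, trace_outer_mul_transpose_outer, hψ]
  have hinv := mul_inv_mul_cancel ((d : ℂ) - 1)⁻¹
  rw [inv_inv] at hinv
  push_cast
  linear_combination (1 - (lam : ℂ)) ^ 2 * hinv

theorem WH_single_output_two_norm (d : ℕ) (hd : 2 ≤ d) (lam : ℝ)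
    (hlam : lam ∈ Set.Icc (0 : ℝ) 1) (ψ : Fin d → ℂ) (hψ : cinner ψ ψ = 1) :
    (WH d lam (outer ψ) * WH d lam (outer ψ)).trace =
      ((lam ^ 2 + 2 * lam * (1 - lam) / ((d : ℝ) - 1) * (1 - ‖cinner ψ (conjVec ψ)‖ ^ 2)
        + (1 - lam) ^ 2 / ((d : ℝ) - 1) : ℝ) : ℂ) :=
  WH_single_output_two_norm_general d lam ψ hψ
end
end

section
/- For any unit vector ψ₁₂ ∈ ℂ^d ⊗ ℂ^d with d ≥ 2, and ρ₁ = Tr₂|ψ₁₂⟩⟨ψ₁₂|, ρ₂ = Tr₁|ψ₁₂⟩⟨ψ₁₂|, the inequality |⟨ψ₁₂|ψ̄₁₂⟩|² ≤ 2(1 − Tr(ρ₁²)) + (1 + √(d-1))·Tr(ρ₁ρ₁^T + ρ₂ρ₂^T) holds. -/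
open Matrix Finset Kronecker

noncomputable section

/-!
Write `ψ` as the `d × d` matrix `Ψ`, so that `ρ₁ = ΨΨᴴ`, `⟨ψ|ψ̄⟩ = conj (Tr ΨΨᵀ)`,
`Tr ρ₂ρ₂ᵀ = ‖ΨΨᵀ‖²` and `Tr ρ₁ρ₁ᵀ = ‖ΨᵀΨ‖²` (Frobenius norms). For rows `x, y` of `Ψ`, with
`β` the bilinear and `⟨·,·⟩` the Hermitian dot product,
`Re (β(x,x) · conj β(y,y)) + |⟨x,y⟩|² ≤ ‖x‖²‖y‖² + |β(x,y)|²`: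
the real matrices `Im (x x̄ᵀ)` and `Im (y ȳᵀ)` have inner product `(|⟨x,y⟩|² - |β(x,y)|²) / 2`
and squared norms `(‖x‖⁴ - |β(x,x)|²) / 2`, so this is Cauchy–Schwarz for them combined with
`|β(x,x)| ≤ ‖x‖²`. Summing over all pairs of rows gives `|Tr ΨΨᵀ|² + Tr ρ₁² ≤ 1 + ‖ΨΨᵀ‖²`,
and together with `Tr ρ₁² ≤ (Tr ρ₁)² = 1` this implies the claim, as `1 + √(d-1) ≥ 1`.
-/

lemma mul_add_le_mul_of_sq_le {s t X Y W : ℝ} (hs : 0 ≤ s) (hsX : s ≤ X) (ht : 0 ≤ t)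
    (htY : t ≤ Y) (hW : W ^ 2 ≤ (X ^ 2 - s ^ 2) * (Y ^ 2 - t ^ 2)) : s * t + W ≤ X * Y := by
  have hst : s * t ≤ X * Y := mul_le_mul hsX htY ht (hs.trans hsX)
  -- `(XY - st)² - (X² - s²)(Y² - t²) = (Xt - sY)²`
  nlinarith [sq_nonneg (X * t - s * Y)]

lemma Complex.im_mul_im (z w : ℂ) : z.im * w.im = (z * star w - z * w).re / 2 := by
  simp only [Complex.star_def, Complex.sub_re, Complex.mul_re, Complex.conj_re, Complex.conj_im]
  ring

lemma norm_sum_sq_eq {ι : Type*} [Fintype ι] (f : ι → ℂ) :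
    ‖∑ i, f i‖ ^ 2 = ∑ i, ∑ j, (f i * star (f j)).re := by
  rw [Complex.sq_norm, ← Complex.ofReal_re (Complex.normSq _), ← Complex.mul_conj,
    ← Complex.star_def, star_sum, Finset.sum_mul_sum, Complex.re_sum]
  simp only [Complex.re_sum]

section DotProduct

variable {m : Type*} [Fintype m]

lemma norm_dotProduct_star_self (x : m → ℂ) : ‖x ⬝ᵥ star x‖ = ∑ k, ‖x k‖ ^ 2 := by
  have h : x ⬝ᵥ star x = ((∑ k, ‖x k‖ ^ 2 : ℝ) : ℂ) := by
    push_cast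
    exact Finset.sum_congr rfl fun k _ => RCLike.mul_conj (x k)
  rw [h, Complex.norm_of_nonneg (by positivity)]

lemma norm_dotProduct_self_le (x : m → ℂ) : ‖x ⬝ᵥ x‖ ≤ ∑ k, ‖x k‖ ^ 2 :=
  (norm_sum_le _ _).trans_eq <| Finset.sum_congr rfl fun k _ => by rw [norm_mul, sq]

lemma norm_dotProduct_star_sq_le (x y : m → ℂ) :
    ‖x ⬝ᵥ star y‖ ^ 2 ≤ (∑ k, ‖x k‖ ^ 2) * ∑ k, ‖y k‖ ^ 2 := by
  have h := norm_inner_le_norm (𝕜 := ℂ) (WithLp.toLp 2 y) (WithLp.toLp 2 x)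
  rw [EuclideanSpace.inner_toLp_toLp] at h
  calc ‖x ⬝ᵥ star y‖ ^ 2 ≤ (‖WithLp.toLp 2 y‖ * ‖WithLp.toLp 2 x‖) ^ 2 :=
        pow_le_pow_left₀ (norm_nonneg _) h 2
    _ = _ := by rw [mul_pow, EuclideanSpace.norm_sq_eq, EuclideanSpace.norm_sq_eq, mul_comm]

lemma sum_im_outer_mul_im_outer (x y : m → ℂ) :
    ∑ k, ∑ l, (outer x k l).im * (outer y k l).im =
      (‖x ⬝ᵥ star y‖ ^ 2 - ‖x ⬝ᵥ y‖ ^ 2) / 2 := by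
  have h : ∀ k l, outer x k l * star (outer y k l) - outer x k l * outer y k l =
      x k * star (y k) * star (x l * star (y l)) - x k * y k * star (x l * y l) := by
    intro k l
    simp only [outer, star_mul', star_star]
    ring
  simp only [Complex.im_mul_im, h, ← Finset.sum_div, ← Complex.re_sum, Finset.sum_sub_distrib,
    ← Finset.mul_sum, ← Finset.sum_mul, ← star_sum]
  simp only [Complex.star_def, Complex.mul_conj, Complex.sub_re, Complex.ofReal_re,
    Complex.sq_norm, dotProduct, Pi.star_apply]

lemma sq_sum_im_outer_mul_im_outer_le (x y : m → ℂ) :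
    (∑ k, ∑ l, (outer x k l).im * (outer y k l).im) ^ 2 ≤
      (∑ k, ∑ l, (outer x k l).im ^ 2) * ∑ k, ∑ l, (outer y k l).im ^ 2 := by
  simpa only [← Fintype.sum_prod_type'] using
    Finset.sum_mul_sq_le_sq_mul_sq Finset.univ (fun p : m × m => (outer x p.1 p.2).im)
      (fun p => (outer y p.1 p.2).im)

lemma re_dotProduct_self_mul_star_add_le (x y : m → ℂ) :
    (x ⬝ᵥ x * star (y ⬝ᵥ y)).re + ‖x ⬝ᵥ star y‖ ^ 2 ≤
      (∑ k, ‖x k‖ ^ 2) * (∑ k, ‖y k‖ ^ 2) + ‖x ⬝ᵥ y‖ ^ 2 := by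
  have hCS := sq_sum_im_outer_mul_im_outer_le x y
  simp only [sq (outer _ _ _).im] at hCS
  rw [sum_im_outer_mul_im_outer, sum_im_outer_mul_im_outer, sum_im_outer_mul_im_outer,
    norm_dotProduct_star_self, norm_dotProduct_star_self] at hCS
  have hre : (x ⬝ᵥ x * star (y ⬝ᵥ y)).re ≤ ‖x ⬝ᵥ x‖ * ‖y ⬝ᵥ y‖ := by
    simpa only [norm_mul, norm_star] using Complex.re_le_norm (x ⬝ᵥ x * star (y ⬝ᵥ y))
  have := mul_add_le_mul_of_sq_le (norm_nonneg _) (norm_dotProduct_self_le x) (norm_nonneg _)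
    (norm_dotProduct_self_le y) (W := ‖x ⬝ᵥ star y‖ ^ 2 - ‖x ⬝ᵥ y‖ ^ 2) (by nlinarith [hCS])
  linarith

end DotProduct

section Trace

variable {n m : Type*} [Fintype n] [Fintype m]

lemma trace_mul_conjTranspose_mul_transpose {R : Type*} [CommRing R] [StarRing R]
    (B : Matrix n m R) : (B * Bᴴ * (B * Bᴴ)ᵀ).trace = ((Bᵀ * B)ᴴ * (Bᵀ * B)).trace := by
  rw [transpose_mul, conjTranspose_mul, transpose_conjTranspose, conjTranspose_transpose,
    Matrix.mul_assoc, trace_mul_comm, Matrix.mul_assoc, Matrix.mul_assoc, Matrix.mul_assoc]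

lemma re_trace_conjTranspose_mul_self (M : Matrix n m ℂ) :
    (Mᴴ * M).trace.re = ∑ j, ∑ i, ‖M i j‖ ^ 2 := by
  simp only [Matrix.trace, Matrix.diag, Matrix.mul_apply, Matrix.conjTranspose_apply,
    Complex.re_sum]
  refine Finset.sum_congr rfl fun j _ => Finset.sum_congr rfl fun i _ => ?_
  rw [mul_comm, Complex.star_def, RCLike.mul_conj]
  norm_cast

lemma re_trace_mul_conjTranspose_self (A : Matrix n m ℂ) :
    (A * Aᴴ).trace.re = ∑ i, ∑ k, ‖A i k‖ ^ 2 := by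
  simpa using re_trace_conjTranspose_mul_self Aᴴ

lemma re_trace_mul_conjTranspose_self_sq (A : Matrix n m ℂ) :
    (A * Aᴴ).trace.re ^ 2 = ∑ i, ∑ j, (∑ k, ‖A i k‖ ^ 2) * ∑ k, ‖A j k‖ ^ 2 := by
  rw [re_trace_mul_conjTranspose_self, sq, Finset.sum_mul_sum]

lemma re_trace_mul_conjTranspose_self_mul_self (A : Matrix n m ℂ) :
    (A * Aᴴ * (A * Aᴴ)).trace.re = ∑ i, ∑ j, ‖A i ⬝ᵥ star (A j)‖ ^ 2 := by
  nth_rewrite 1 [← (isHermitian_mul_conjTranspose_self A).eq]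
  rw [re_trace_conjTranspose_mul_self, Finset.sum_comm]
  rfl

lemma re_trace_mul_conjTranspose_self_mul_self_le (A : Matrix n m ℂ) :
    (A * Aᴴ * (A * Aᴴ)).trace.re ≤ (A * Aᴴ).trace.re ^ 2 := by
  rw [re_trace_mul_conjTranspose_self_mul_self, re_trace_mul_conjTranspose_self_sq]
  exact Finset.sum_le_sum fun i _ => Finset.sum_le_sum fun j _ =>
    norm_dotProduct_star_sq_le (A i) (A j)

lemma norm_trace_mul_transpose_sq_add_le (A : Matrix n m ℂ) :
    ‖(A * Aᵀ).trace‖ ^ 2 + (A * Aᴴ * (A * Aᴴ)).trace.re ≤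
      (A * Aᴴ).trace.re ^ 2 + ((A * Aᵀ)ᴴ * (A * Aᵀ)).trace.re := by
  rw [Matrix.trace, norm_sum_sq_eq, re_trace_mul_conjTranspose_self_mul_self,
    re_trace_mul_conjTranspose_self_sq, re_trace_conjTranspose_mul_self,
    Finset.sum_comm (f := fun j i => ‖(A * Aᵀ) i j‖ ^ 2), ← Finset.sum_add_distrib,
    ← Finset.sum_add_distrib]
  refine Finset.sum_le_sum fun i _ => ?_
  rw [← Finset.sum_add_distrib, ← Finset.sum_add_distrib]
  exact Finset.sum_le_sum fun j _ => re_dotProduct_self_mul_star_add_le (A i) (A j)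

end Trace

section StateMatrix

variable {d : ℕ} (ψ : Fin d × Fin d → ℂ)

lemma ptr2_outer : ptr2 (outer ψ) = of (Function.curry ψ) * (of (Function.curry ψ))ᴴ := rfl

lemma ptr1_outer : ptr1 (outer ψ) = (of (Function.curry ψ))ᵀ * (of (Function.curry ψ))ᵀᴴ :=
  rfl

lemma cinner_self_eq_trace :
    cinner ψ ψ = (of (Function.curry ψ) * (of (Function.curry ψ))ᴴ).trace := by
  rw [cinner, Fintype.sum_prod_type]
  exact Finset.sum_congr rfl fun i _ => Finset.sum_congr rfl fun k _ => mul_comm _ _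

lemma cinner_conjVec_eq_star_trace :
    cinner ψ (conjVec ψ) = star (of (Function.curry ψ) * (of (Function.curry ψ))ᵀ).trace := by
  rw [cinner, Fintype.sum_prod_type, Matrix.trace, star_sum]
  refine Finset.sum_congr rfl fun i _ => ?_
  rw [Matrix.diag, Matrix.mul_apply, star_sum]
  exact Finset.sum_congr rfl fun k _ => (star_mul' _ _).symm

end StateMatrix

theorem key_multiplicativity_inequality_general (d : ℕ)
    (ψ : Fin d × Fin d → ℂ) (hψ : cinner ψ ψ = 1) :
    ‖cinner ψ (conjVec ψ)‖ ^ 2 ≤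
      2 * (1 - (ptr2 (outer ψ) * ptr2 (outer ψ)).trace.re) +
        (1 + Real.sqrt ((d : ℝ) - 1)) *
          ((ptr2 (outer ψ) * (ptr2 (outer ψ))ᵀ).trace.re +
            (ptr1 (outer ψ) * (ptr1 (outer ψ))ᵀ).trace.re) := by
  set Ψ := of (Function.curry ψ)
  rw [cinner_conjVec_eq_star_trace, norm_star, ptr2_outer, ptr1_outer,
    trace_mul_conjTranspose_mul_transpose, trace_mul_conjTranspose_mul_transpose,
    transpose_transpose]
  have htrace : (Ψ * Ψᴴ).trace.re = 1 := by rw [← cinner_self_eq_trace, hψ, Complex.one_re]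
  have hmain := norm_trace_mul_transpose_sq_add_le Ψ
  have hpurity := re_trace_mul_conjTranspose_self_mul_self_le Ψ
  rw [htrace, one_pow] at hmain hpurity
  have hT₁ : 0 ≤ ((Ψᵀ * Ψ)ᴴ * (Ψᵀ * Ψ)).trace.re := by
    rw [re_trace_conjTranspose_mul_self]; positivity
  have hT₂ : 0 ≤ ((Ψ * Ψᵀ)ᴴ * (Ψ * Ψᵀ)).trace.re := by
    rw [re_trace_conjTranspose_mul_self]; positivity
  have hκ : 1 ≤ 1 + Real.sqrt ((d : ℝ) - 1) := le_add_of_nonneg_right (Real.sqrt_nonneg _)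
  linarith [mul_le_mul_of_nonneg_right hκ (add_nonneg hT₁ hT₂)]

theorem key_multiplicativity_inequality (d : ℕ) (hd : 2 ≤ d)
    (ψ : Fin d × Fin d → ℂ) (hψ : cinner ψ ψ = 1) :
    ‖cinner ψ (conjVec ψ)‖ ^ 2 ≤
      2 * (1 - (ptr2 (outer ψ) * ptr2 (outer ψ)).trace.re) +
        (1 + Real.sqrt ((d : ℝ) - 1)) *
          ((ptr2 (outer ψ) * (ptr2 (outer ψ))ᵀ).trace.re +
            (ptr1 (outer ψ) * (ptr1 (outer ψ))ᵀ).trace.re) :=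
  key_multiplicativity_inequality_general d ψ hψ
end
end

section
/- For any orthonormal basis {e_i} of ℂ^d and any indices i, k, l, Tr(W_{λ,d}(|e_l⟩⟨e_i|)·W_{λ,d}(|e_j⟩⟨e_k|)) = [λ² + ((1-λ)/(d-1))²]δ_{i,j}δ_{k,l} + [2λ(1-λ)/(d-1) + (d-2)((1-λ)/(d-1))²]δ_{i,l}δ_{j,k} − (2λ(1-λ)/(d-1))⟨e_i|ē_k⟩⟨ē_l|e_j⟩. -/
open Matrix Finset Kronecker

noncomputable section

/-!
`W_{λ,d}` has the shape `A ↦ λ A + c (tr A · 1 - Aᵀ)` with `c = (1 - λ)/(d - 1)`. For such a map,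
`tr (W A * W B)` is a combination of `tr (A B)`, `tr A · tr B` and `tr (A Bᵀ)` alone, because
`tr (Aᵀ Bᵀ) = tr (A B)` and `tr (Aᵀ B) = tr (A Bᵀ)`. For `A = |e_l⟩⟨e_i|` and `B = |e_j⟩⟨e_k|`
orthonormality turns the first two into `δ_ij δ_kl` and `δ_il δ_jk`, while `Bᵀ = |ē_k⟩⟨ē_j|`
gives the last one as `⟨e_i|ē_k⟩⟨ē_l|e_j⟩`.
-/

namespace Matrix

lemma trace_transpose_mul_eq_trace_mul_transpose {m n R : Type*} [Fintype m] [Fintype n]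
    [CommSemiring R] (A B : Matrix m n R) : (Aᵀ * B).trace = (A * Bᵀ).trace := by
  rw [← trace_transpose, transpose_mul, transpose_transpose, trace_mul_comm]

variable {n R : Type*} [Fintype n] [DecidableEq n] [CommRing R]

def depolTranspose (a c : R) (A : Matrix n n R) : Matrix n n R :=
  a • A + c • (A.trace • 1 - Aᵀ)

lemma trace_depolTranspose_mul (a c : R) (A B : Matrix n n R) :
    (depolTranspose a c A * depolTranspose a c B).trace =
      (a ^ 2 + c ^ 2) * (A * B).trace
        + (2 * a * c + (Fintype.card n - 2) * c ^ 2) * A.trace * B.trace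
        - 2 * a * c * (A * Bᵀ).trace := by
  simp only [depolTranspose, Matrix.add_mul, Matrix.mul_add, Matrix.sub_mul, Matrix.mul_sub,
    Matrix.smul_mul, Matrix.mul_smul, Matrix.one_mul, Matrix.mul_one, transpose_transpose,
    trace_add, trace_sub, trace_smul, trace_one, trace_transpose,
    trace_transpose_mul_eq_trace_mul_transpose, smul_eq_mul]
  ring

end Matrix

lemma WH_eq_depolTranspose (d : ℕ) (lam : ℝ) :
    WH d lam = depolTranspose (lam : ℂ) (((1 - lam : ℝ) : ℂ) * ((d : ℂ) - 1)⁻¹) :=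
  rfl

section OuterProduct

variable {n : Type*} [Fintype n]

lemma outerLR_transpose (φ χ : n → ℂ) :
    (outerLR φ χ)ᵀ = outerLR (conjVec χ) (conjVec φ) := by
  ext p q
  simp [outerLR, conjVec, mul_comm]

lemma trace_outerLR (φ χ : n → ℂ) : (outerLR φ χ).trace = cinner χ φ := by
  simp [trace, outerLR, cinner, mul_comm]

lemma trace_outerLR_mul_outerLR (φ χ φ' χ' : n → ℂ) :
    (outerLR φ χ * outerLR φ' χ').trace = cinner χ φ' * cinner χ' φ := by
  simp only [trace, Matrix.diag, mul_apply, outerLR, cinner]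
  rw [Finset.sum_comm, Finset.sum_mul_sum]
  refine Finset.sum_congr rfl fun x _ => Finset.sum_congr rfl fun y _ => ?_
  ring

lemma cinner_conjVec_left_comm (u v : n → ℂ) :
    cinner (conjVec u) v = cinner (conjVec v) u := by
  simp [cinner, conjVec, mul_comm]

end OuterProduct

theorem WH_EP_trace_formula_general (d : ℕ) (lam : ℝ)
    (e : Fin d → Fin d → ℂ)
    (he : ∀ i j, cinner (e i) (e j) = if i = j then 1 else 0)
    (i j k l : Fin d) :
    (WH d lam (outerLR (e l) (e i)) * WH d lam (outerLR (e j) (e k))).trace =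
      ((lam ^ 2 + ((1 - lam) / ((d : ℝ) - 1)) ^ 2 : ℝ) : ℂ) *
          (if i = j then 1 else 0) * (if k = l then 1 else 0) +
        ((2 * lam * (1 - lam) / ((d : ℝ) - 1)
            + ((d : ℝ) - 2) * ((1 - lam) / ((d : ℝ) - 1)) ^ 2 : ℝ) : ℂ) *
          (if i = l then 1 else 0) * (if j = k then 1 else 0) -
        ((2 * lam * (1 - lam) / ((d : ℝ) - 1) : ℝ) : ℂ) *
          (cinner (e i) (conjVec (e k)) * cinner (conjVec (e l)) (e j)) := by
  rw [WH_eq_depolTranspose, trace_depolTranspose_mul, outerLR_transpose, trace_outerLR_mul_outerLR,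
    trace_outerLR_mul_outerLR, trace_outerLR, trace_outerLR, he, he, he, he,
    cinner_conjVec_left_comm (e j), Fintype.card_fin]
  simp only [@eq_comm _ k j]
  push_cast
  ring

theorem WH_EP_trace_formula (d : ℕ) (hd : 2 ≤ d) (lam : ℝ)
    (e : Fin d → Fin d → ℂ)
    (he : ∀ i j, cinner (e i) (e j) = if i = j then 1 else 0)
    (i j k l : Fin d) :
    (WH d lam (outerLR (e l) (e i)) * WH d lam (outerLR (e j) (e k))).trace =
      ((lam ^ 2 + ((1 - lam) / ((d : ℝ) - 1)) ^ 2 : ℝ) : ℂ) *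
          (if i = j then 1 else 0) * (if k = l then 1 else 0) +
        ((2 * lam * (1 - lam) / ((d : ℝ) - 1)
            + ((d : ℝ) - 2) * ((1 - lam) / ((d : ℝ) - 1)) ^ 2 : ℝ) : ℂ) *
          (if i = l then 1 else 0) * (if j = k then 1 else 0) -
        ((2 * lam * (1 - lam) / ((d : ℝ) - 1) : ℝ) : ℂ) *
          (cinner (e i) (conjVec (e k)) * cinner (conjVec (e l)) (e j)) :=
  WH_EP_trace_formula_general d lam e he i j k l
end
end
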